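/- arXiv:2012.05039 — 2 statements merged into one kernel-verified Lean document; each statement's English description precedes it below -/
import Mathlib

section
/- Let η : ℝ → ℝ be a differentiable odd function, and define F on the open unit disc D = {w ∈ ℂ : |w| < 1} by F(0) = 0 and F(w) = η(artanh|w|)·w/|w| for w ≠ 0, where artanh is the inverse hyperbolic tangent. Then F is real differentiable at every point of D with det(DF(w)) = (1 − |w|²)^{−2} for all w ∈ D (DF(w) denoting the Fréchet derivative of F at w as an ℝ-linear endomorphism of ℂ ≅ ℝ²) if and only if η = sinh or η = −sinh. -/
/-!
A radial map `z ↦ (h ‖z‖ / ‖z‖) • z` of the plane has Jacobian `h(ρ) h'(ρ) / ρ` at radius `ρ`.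
For `h = η ∘ artanh` and `ρ = tanh a`, the condition `det DF = (1 - ρ²)⁻²` therefore reads
`η η' = sinh cosh` on `(0, ∞)`, i.e. `(η² - sinh²)' = 0` there; as `η 0 = 0`, this gives
`η² = sinh²`, and continuity together with oddness leaves only `η = ± sinh`.
Conversely, for `η = ± sinh` the map is `F z = ± z / √(1 - ‖z‖²)`, which is smooth on the whole
disc, centre included, with Jacobian `(1 - ‖z‖²)⁻²`.
-/

/-- The inverse hyperbolic tangent (not available in Mathlib). -/
noncomputable def Real.artanh' (x : ℝ) : ℝ := Real.log ((1 + x) / (1 - x)) / 2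

open Module Set Filter Topology

namespace Real

theorem artanh'_eq_artanh {x : ℝ} (hx : x ∈ Icc (-1) 1) : artanh' x = artanh x := by
  rw [artanh_eq_half_log hx, artanh']
  ring

theorem artanh'_tanh (a : ℝ) : artanh' (tanh a) = a := by
  rw [artanh'_eq_artanh ⟨(neg_one_lt_tanh a).le, (tanh_lt_one a).le⟩, artanh_tanh]

theorem sinh_artanh' {x : ℝ} (hx : x ∈ Ioo (-1) 1) : sinh (artanh' x) = x / √(1 - x ^ 2) := by
  rw [artanh'_eq_artanh (Ioo_subset_Icc_self hx), sinh_artanh hx]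

theorem hasDerivAt_artanh' {x : ℝ} (hx : x ∈ Ioo (-1) 1) :
    HasDerivAt artanh' (1 - x ^ 2)⁻¹ x := by
  have hx₁ : 0 < 1 + x := by linarith [hx.1]
  have hx₂ : 0 < 1 - x := by linarith [hx.2]
  refine (((((hasDerivAt_id x).const_add 1).div ((hasDerivAt_id x).const_sub 1)
    hx₂.ne').log (div_pos hx₁ hx₂).ne').div_const 2).congr_deriv ?_
  have hfactor : 1 - x ^ 2 = (1 + x) * (1 - x) := by ring
  simp only [id, Pi.div_apply, hfactor]
  field_simp
  ring

end Real

section NormedSpace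

variable {E : Type*} [NormedAddCommGroup E] [NormedSpace ℝ E]

theorem HasFDerivAt.smul_self {c : E → ℝ} {L : E →L[ℝ] ℝ} {w : E} (hc : HasFDerivAt c L w) :
    HasFDerivAt (fun z => c z • z) (c w • 1 + L.smulRight w) w :=
  hc.smul (hasFDerivAt_id w)

-- For `a ≠ 0` the map is `a` times a transvection; the case `a = 0` follows by continuity in `a`.
theorem ContinuousLinearMap.det_smul_one_add_smulRight [FiniteDimensional ℝ E] [Nontrivial E]
    (a : ℝ) (L : E →L[ℝ] ℝ) (v : E) :
    (a • 1 + L.smulRight v).det = a ^ (finrank ℝ E - 1) * (a + L v) := by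
  have hn : finrank ℝ E - 1 + 1 = finrank ℝ E := Nat.sub_add_cancel finrank_pos
  have hne : ∀ a ≠ 0, (a • 1 + L.smulRight v).det = a ^ (finrank ℝ E - 1) * (a + L v) := by
    intro a ha
    have htrans : ((a • 1 + L.smulRight v : E →L[ℝ] E) : E →ₗ[ℝ] E) =
        a • LinearMap.transvection (a⁻¹ • (L : E →ₗ[ℝ] ℝ)) v := by
      ext x
      simp [LinearMap.transvection.apply, smul_smul, ha]
    rw [ContinuousLinearMap.det, htrans, LinearMap.det_smul, LinearMap.transvection.det, ← hn]
    simp only [LinearMap.smul_apply, ContinuousLinearMap.coe_coe, smul_eq_mul,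
      add_tsub_cancel_right]
    field_simp
    ring
  exact congrFun (Continuous.ext_on (dense_compl_singleton 0)
    (ContinuousLinearMap.continuous_det.comp (by fun_prop)) (by fun_prop) hne) a

end NormedSpace

section InnerProductSpace

variable {E : Type*} [NormedAddCommGroup E] [InnerProductSpace ℝ E] [FiniteDimensional ℝ E]

theorem det_fderiv_smul_norm_sq [Nontrivial E] {g : ℝ → ℝ} {g' : ℝ} {w : E}
    (hg : HasDerivAt g g' (‖w‖ ^ 2)) :
    DifferentiableAt ℝ (fun z => g (‖z‖ ^ 2) • z) w ∧
      (fderiv ℝ (fun z => g (‖z‖ ^ 2) • z) w).det =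
        g (‖w‖ ^ 2) ^ (finrank ℝ E - 1) * (g (‖w‖ ^ 2) + 2 * ‖w‖ ^ 2 * g') := by
  have h : HasFDerivAt (fun z => g (‖z‖ ^ 2) • z) _ w :=
    (hg.comp_hasFDerivAt w (hasStrictFDerivAt_norm_sq w).hasFDerivAt).smul_self
  have hL : (g' • (2 • innerSL ℝ w : E →L[ℝ] ℝ)) w = 2 * ‖w‖ ^ 2 * g' := by
    simp only [smul_apply, coe_innerSL_apply, real_inner_self_eq_norm_sq,
      nsmul_eq_mul, Nat.cast_ofNat, smul_eq_mul]
    ring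
  refine ⟨h.differentiableAt, ?_⟩
  rw [h.fderiv, ContinuousLinearMap.det_smul_one_add_smulRight, hL]
  rfl

theorem det_fderiv_radial {h : ℝ → ℝ} {h' : ℝ} {w : E} (hw : w ≠ 0)
    (hh : HasDerivAt h h' ‖w‖) :
    (fderiv ℝ (fun z => (h ‖z‖ / ‖z‖) • z) w).det = (h ‖w‖ / ‖w‖) ^ (finrank ℝ E - 1) * h' := by
  have : Nontrivial E := nontrivial_of_ne w 0 hw
  have hρ : 0 < ‖w‖ := norm_pos_iff.mpr hw
  have hsqrt : √(‖w‖ ^ 2) = ‖w‖ := Real.sqrt_sq hρ.le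
  have hs := Real.hasDerivAt_sqrt (pow_pos hρ 2).ne'
  rw [← hsqrt] at hh
  have hg : HasDerivAt (fun s => h √s / √s) _ (‖w‖ ^ 2) :=
    (hh.comp (‖w‖ ^ 2) hs).div hs (by rw [hsqrt]; exact hρ.ne')
  have hfun : (fun z : E => (h ‖z‖ / ‖z‖) • z) = fun z => (h √(‖z‖ ^ 2) / √(‖z‖ ^ 2)) • z := by
    funext z
    rw [Real.sqrt_sq (norm_nonneg z)]
  rw [hfun, (det_fderiv_smul_norm_sq hg).2]
  simp only [Function.comp, hsqrt]
  field_simp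
  ring

end InnerProductSpace

theorem Function.Odd.eq_of_eqOn_Ioi {α β : Type*} [AddCommGroup α] [LinearOrder α]
    [IsOrderedAddMonoid α] [AddCommGroup β] [IsAddTorsionFree β] {f g : α → β}
    (hf : f.Odd) (hg : g.Odd) (h : EqOn f g (Ioi 0)) : f = g := by
  funext x
  rcases lt_trichotomy x 0 with hx | rfl | hx
  · rw [← neg_neg x, hf, hg, h (neg_pos.mpr hx)]
  · rw [hf.map_zero, hg.map_zero]
  · exact h hx

theorem sq_eq_sq_of_mul_deriv_eq {f g : ℝ → ℝ} {a x : ℝ} (hf : Differentiable ℝ f)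
    (hg : Differentiable ℝ g) (ha : f a ^ 2 = g a ^ 2)
    (h : ∀ y, a < y → f y * deriv f y = g y * deriv g y) (hx : a < x) :
    f x ^ 2 = g x ^ 2 := by
  have hderiv : ∀ y, HasDerivAt (fun y => f y ^ 2 - g y ^ 2)
      (2 * (f y * deriv f y - g y * deriv g y)) y := fun y =>
    (((hf y).hasDerivAt.pow 2).sub ((hg y).hasDerivAt.pow 2)).congr_deriv (by push_cast; ring)
  obtain ⟨c, hc, hslope⟩ := exists_hasDerivAt_eq_slope (fun y => f y ^ 2 - g y ^ 2) _ hx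
    ((hf.pow 2).sub (hg.pow 2)).continuous.continuousOn (fun y _ => hderiv y)
  rw [h c hc.1, sub_self, mul_zero, eq_comm, div_eq_zero_iff] at hslope
  rcases hslope with hslope | hslope <;> linarith

theorem eq_sinh_or_eq_neg_sinh_of_sq_eq {η : ℝ → ℝ} (hodd : η.Odd) (hcont : Continuous η)
    (hsq : ∀ x, 0 < x → η x ^ 2 = Real.sinh x ^ 2) :
    η = Real.sinh ∨ η = fun x => -Real.sinh x := by
  rcases isPreconnected_Ioi.eq_or_eq_neg_of_sq_eq hcont.continuousOn
    Real.continuous_sinh.continuousOn (fun x hx => hsq x hx)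
    (fun hx => (Real.sinh_pos_iff.mpr hx).ne') with h | h
  · exact .inl (hodd.eq_of_eqOn_Ioi Real.sinh_neg h)
  · exact .inr (hodd.eq_of_eqOn_Ioi (fun x => by simp [Real.sinh_neg]) h)

theorem eventuallyEq_smul_of_radial {η : ℝ → ℝ} {F : ℂ → ℂ}
    (hF : ∀ w : ℂ, w ≠ 0 → ‖w‖ < 1 →
      F w = (η (Real.artanh' ‖w‖) : ℂ) * w / ((‖w‖ : ℝ) : ℂ))
    {w : ℂ} (hw₀ : w ≠ 0) (hw : ‖w‖ < 1) :
    F =ᶠ[𝓝 w] fun z => (η (Real.artanh' ‖z‖) / ‖z‖) • z := by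
  filter_upwards [isOpen_compl_singleton.mem_nhds hw₀,
    (isOpen_lt continuous_norm continuous_const).mem_nhds hw] with z hz₀ hz
  rw [hF z hz₀ hz, Complex.real_smul]
  push_cast
  ring

theorem mul_deriv_eq_sinh_mul_cosh_of_det_fderiv {η : ℝ → ℝ} (hdiff : Differentiable ℝ η)
    {F : ℂ → ℂ}
    (hF : ∀ w : ℂ, w ≠ 0 → ‖w‖ < 1 →
      F w = (η (Real.artanh' ‖w‖) : ℂ) * w / ((‖w‖ : ℝ) : ℂ))
    (hJ : ∀ w : ℂ, ‖w‖ < 1 → (fderiv ℝ F w).det = (1 - ‖w‖ ^ 2) ^ (-2 : ℤ))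
    {a : ℝ} (ha : 0 < a) : η a * deriv η a = Real.sinh a * Real.cosh a := by
  have hsinh := Real.sinh_pos_iff.mpr ha
  have hcosh := Real.cosh_pos a
  have hρ : Real.tanh a ∈ Ioo (-1) 1 := ⟨Real.neg_one_lt_tanh a, Real.tanh_lt_one a⟩
  have hρ₀ : 0 < Real.tanh a := by
    rw [Real.tanh_eq_sinh_div_cosh]
    exact div_pos hsinh hcosh
  set w : ℂ := (Real.tanh a : ℂ)
  have hw₀ : w ≠ 0 := Complex.ofReal_ne_zero.mpr hρ₀.ne'
  have hnorm : ‖w‖ = Real.tanh a := by rw [Complex.norm_real, Real.norm_of_nonneg hρ₀.le]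
  have hw : ‖w‖ < 1 := hnorm ▸ hρ.2
  have hh : HasDerivAt (fun r => η (Real.artanh' r))
      (deriv η a * (1 - Real.tanh a ^ 2)⁻¹) ‖w‖ := by
    have h := (hdiff _).hasDerivAt.comp _ (Real.hasDerivAt_artanh' hρ)
    rw [Real.artanh'_tanh] at h
    rw [hnorm]
    exact h
  have hdet := hJ w hw
  rw [(eventuallyEq_smul_of_radial hF hw₀ hw).fderiv_eq, det_fderiv_radial hw₀ hh, hnorm,
    Real.artanh'_tanh, Complex.finrank_real_complex] at hdet
  have htanh : 1 - Real.tanh a ^ 2 = (Real.cosh a ^ 2)⁻¹ := by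
    rw [Real.tanh_eq_sinh_div_cosh, div_pow, one_sub_div (by positivity),
      Real.cosh_sq_sub_sinh_sq, one_div]
  rw [htanh, show 2 - 1 = 1 from rfl, pow_one, Real.tanh_eq_sinh_div_cosh] at hdet
  field_simp at hdet
  exact hdet

theorem det_fderiv_of_eq_mul_sinh {η : ℝ → ℝ} {ε : ℝ} (hη : ∀ x, η x = ε * Real.sinh x)
    {F : ℂ → ℂ} (hF0 : F 0 = 0)
    (hF : ∀ w : ℂ, w ≠ 0 → ‖w‖ < 1 →
      F w = (η (Real.artanh' ‖w‖) : ℂ) * w / ((‖w‖ : ℝ) : ℂ))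
    {w : ℂ} (hw : ‖w‖ < 1) :
    DifferentiableAt ℝ F w ∧ (fderiv ℝ F w).det = ε ^ 2 * (1 - ‖w‖ ^ 2) ^ (-2 : ℤ) := by
  have hdisc : ∀ z : ℂ, ‖z‖ < 1 → 0 < 1 - ‖z‖ ^ 2 := fun z hz => by
    nlinarith [norm_nonneg z]
  -- Unlike the polar form, this profile in `‖z‖ ^ 2` is differentiable at the centre too.
  set g : ℝ → ℝ := fun s => ε * (√(1 - s))⁻¹
  have hev : F =ᶠ[𝓝 w] fun z => g (‖z‖ ^ 2) • z := by
    filter_upwards [(isOpen_lt continuous_norm continuous_const).mem_nhds hw] with z hz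
    rcases eq_or_ne z 0 with rfl | hz₀
    · simp [hF0]
    have hroot : √(1 - ‖z‖ ^ 2) ≠ 0 := (Real.sqrt_pos.mpr (hdisc z hz)).ne'
    have hnorm : (‖z‖ : ℂ) ≠ 0 := Complex.ofReal_ne_zero.mpr (norm_ne_zero_iff.mpr hz₀)
    rw [hF z hz₀ hz, hη, Real.sinh_artanh' ⟨by linarith [norm_nonneg z], hz⟩, Complex.real_smul]
    simp only [g]
    push_cast
    field_simp
  have hu₀ : √(1 - ‖w‖ ^ 2) ≠ 0 := (Real.sqrt_pos.mpr (hdisc w hw)).ne'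
  have hu : √(1 - ‖w‖ ^ 2) ^ 2 = 1 - ‖w‖ ^ 2 := Real.sq_sqrt (hdisc w hw).le
  have hg : HasDerivAt g (ε / (2 * √(1 - ‖w‖ ^ 2) ^ 3)) (‖w‖ ^ 2) := by
    refine ((((Real.hasDerivAt_sqrt (hdisc w hw).ne').comp _
      ((hasDerivAt_id' _).const_sub 1)).inv hu₀).const_mul ε).congr_deriv ?_
    simp only [Function.comp_apply]
    field_simp
  obtain ⟨hdiff, hdet⟩ := det_fderiv_smul_norm_sq hg
  refine ⟨hdiff.congr_of_eventuallyEq hev, ?_⟩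
  rw [hev.fderiv_eq, hdet, Complex.finrank_real_complex, show 2 - 1 = 1 from rfl, pow_one,
    zpow_neg, zpow_two]
  simp only [g]
  generalize √(1 - ‖w‖ ^ 2) = u at hu hu₀ ⊢
  rw [← hu]
  field_simp
  linear_combination ε ^ 2 * hu

/-- Let `η : ℝ → ℝ` be a differentiable odd function and let `F` be defined on the open
unit disc by `F 0 = 0` and `F w = η (artanh |w|) · w / |w|` for `w ≠ 0`.  Then `F` is
real differentiable at every point of the disc with Jacobian determinant
`det (DF(w)) = (1 - |w|²)⁻²` iff `η = sinh` or `η = -sinh`. -/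
theorem radial_map_symplectic_iff_sinh (η : ℝ → ℝ)
    (hodd : ∀ x : ℝ, η (-x) = -η x) (hdiff : Differentiable ℝ η)
    (F : ℂ → ℂ) (hF0 : F 0 = 0)
    (hF : ∀ w : ℂ, w ≠ 0 → ‖w‖ < 1 →
      F w = (η (Real.artanh' ‖w‖) : ℂ) * w / ((‖w‖ : ℝ) : ℂ)) :
    (∀ w : ℂ, ‖w‖ < 1 →
        DifferentiableAt ℝ F w ∧
          (fderiv ℝ F w).det = (1 - ‖w‖ ^ 2) ^ (-2 : ℤ)) ↔
      (η = Real.sinh ∨ η = fun x => -Real.sinh x) := by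
  constructor
  · intro hJ
    have hsq : ∀ x, 0 < x → η x ^ 2 = Real.sinh x ^ 2 := fun x hx =>
      sq_eq_sq_of_mul_deriv_eq hdiff Real.differentiable_sinh
        (by simp [Function.Odd.map_zero hodd])
        (fun a ha => by
          rw [mul_deriv_eq_sinh_mul_cosh_of_det_fderiv hdiff hF (fun w hw => (hJ w hw).2) ha,
            Real.deriv_sinh])
        hx
    exact eq_sinh_or_eq_neg_sinh_of_sq_eq hodd hdiff.continuous hsq
  · intro hη w hw
    obtain ⟨ε, hε, hηε⟩ : ∃ ε : ℝ, ε ^ 2 = 1 ∧ ∀ x, η x = ε * Real.sinh x := by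
      rcases hη with rfl | rfl
      · exact ⟨1, one_pow 2, fun x => (one_mul _).symm⟩
      · exact ⟨-1, by norm_num, fun x => (neg_one_mul _).symm⟩
    simpa only [hε, one_mul] using det_fderiv_of_eq_mul_sinh hηε hF0 hF hw
end

section
/- Define g : ℂ → ℂ by g(w) = w / √(1 + |w|²). Then for every w ∈ ℂ, g is real differentiable at w and the determinant of its Fréchet derivative at w, viewed as an ℝ-linear endomorphism of ℂ ≅ ℝ², equals (1 + |w|²)^{−2}. -/
/-!
The map is radial, `g z = φ (‖z‖²) • z` with `φ t = (1 + t)^(-1/2)`, so its derivative at `w` is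
`φ (‖w‖²) • id` plus the rank-one map `v ↦ 2 φ'(‖w‖²) ⟪w, v⟫ • w`. By the matrix determinant lemma
its determinant in dimension two is `φ² (1 + 2 φ' ‖w‖² / φ)`, and with `φ' = -φ³ / 2` this is
`φ² (1 - ‖w‖² φ²) = φ⁴ = (1 + ‖w‖²)⁻²`.
-/

open Module

theorem LinearMap.det_id_add_smulRight {R M : Type*} [CommRing R] [AddCommGroup M] [Module R M]
    [Module.Free R M] [Module.Finite R M] (f : M →ₗ[R] R) (v : M) :
    LinearMap.det (LinearMap.id + f.smulRight v) = 1 + f v := by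
  let b := Module.Free.chooseBasis R M
  rw [← LinearMap.det_toMatrix b, map_add, LinearMap.toMatrix_id, LinearMap.toMatrix_smulRight,
    Matrix.vecMulVec_eq Unit, Matrix.det_one_add_replicateCol_mul_replicateRow]
  simp only [dotProduct, Function.comp_apply, mul_comm]
  conv_rhs => rw [← b.sum_repr v]
  simp only [map_sum, map_smul, smul_eq_mul]

theorem LinearMap.det_smul_id_add_smulRight {K M : Type*} [Field K] [AddCommGroup M] [Module K M]
    [FiniteDimensional K M] (f : M →ₗ[K] K) (v : M) {a : K} (ha : a ≠ 0) :
    LinearMap.det (a • LinearMap.id + f.smulRight v) = a ^ finrank K M * (1 + f v / a) := by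
  have hfactor :
      a • LinearMap.id + f.smulRight v = a • (LinearMap.id + (a⁻¹ • f).smulRight v) := by
    ext x
    simp [smul_smul, ha]
  rw [hfactor, LinearMap.det_smul, LinearMap.det_id_add_smulRight]
  simp [div_eq_inv_mul]

section NormSqSmul

variable {E : Type*} [NormedAddCommGroup E] [InnerProductSpace ℝ E] {φ : ℝ → ℝ} {φ' : ℝ} {w : E}

theorem hasFDerivAt_comp_norm_sq_smul (hφ : HasDerivAt φ φ' (‖w‖ ^ 2)) :
    HasFDerivAt (fun z => φ (‖z‖ ^ 2) • z)
      (φ (‖w‖ ^ 2) • ContinuousLinearMap.id ℝ E + (φ' • 2 • innerSL ℝ w).smulRight w) w :=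
  (hφ.comp_hasFDerivAt w (hasStrictFDerivAt_norm_sq w).hasFDerivAt).smul (hasFDerivAt_id w)

theorem det_fderiv_comp_norm_sq_smul [FiniteDimensional ℝ E] (hφ : HasDerivAt φ φ' (‖w‖ ^ 2))
    (h0 : φ (‖w‖ ^ 2) ≠ 0) :
    (fderiv ℝ (fun z => φ (‖z‖ ^ 2) • z) w).det =
      φ (‖w‖ ^ 2) ^ finrank ℝ E * (1 + 2 * φ' * ‖w‖ ^ 2 / φ (‖w‖ ^ 2)) := by
  rw [(hasFDerivAt_comp_norm_sq_smul hφ).fderiv, ContinuousLinearMap.det]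
  convert LinearMap.det_smul_id_add_smulRight (φ' • 2 • innerₛₗ ℝ w) w h0 using 3
  · ext; simp
  · simp
    ring

end NormSqSmul

theorem hasDerivAt_inv_sqrt_one_add {t : ℝ} (ht : 0 < 1 + t) :
    HasDerivAt (fun s => (√(1 + s))⁻¹) (-(2 * (1 + t) * √(1 + t))⁻¹) t := by
  refine (((hasDerivAt_id' t).const_add 1).sqrt ht.ne' |>.fun_inv
    (Real.sqrt_ne_zero'.2 ht)).congr_deriv ?_
  rw [Real.sq_sqrt ht.le]
  field_simp

/-- The map `g w = w / √(1 + |w|²)` is real differentiable at every point `w ∈ ℂ`, and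
the determinant of its Fréchet derivative at `w` (an `ℝ`-linear endomorphism of
`ℂ ≅ ℝ²`) equals `(1 + |w|²)⁻²`. -/
theorem dual_symplectic_jacobian (w : ℂ) :
    DifferentiableAt ℝ
        (fun z : ℂ => z / (Real.sqrt (1 + ‖z‖ ^ 2) : ℂ)) w ∧
      (fderiv ℝ (fun z : ℂ => z / (Real.sqrt (1 + ‖z‖ ^ 2) : ℂ)) w).det =
        (1 + ‖w‖ ^ 2) ^ (-2 : ℤ) := by
  have hq : 0 < 1 + ‖w‖ ^ 2 := by positivity
  have hφ := hasDerivAt_inv_sqrt_one_add hq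
  have hg : (fun z : ℂ => z / (Real.sqrt (1 + ‖z‖ ^ 2) : ℂ)) =
      fun z => (√(1 + ‖z‖ ^ 2))⁻¹ • z := by
    ext1 z
    rw [Complex.real_smul, Complex.ofReal_inv, div_eq_inv_mul]
  rw [hg]
  refine ⟨(hasFDerivAt_comp_norm_sq_smul hφ).differentiableAt, ?_⟩
  rw [det_fderiv_comp_norm_sq_smul hφ (by positivity), Complex.finrank_real_complex]
  have hs : √(1 + ‖w‖ ^ 2) ^ 2 = 1 + ‖w‖ ^ 2 := Real.sq_sqrt hq.le
  have hs_pos : 0 < √(1 + ‖w‖ ^ 2) := Real.sqrt_pos.2 hq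
  field_simp
  rw [hs]
  ring
end
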